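/- arXiv:1304.0840 — 5 statements merged into one kernel-verified Lean document; each statement's English description precedes it below -/
import Mathlib

section
/- Let X be an n×n real symmetric positive semidefinite matrix with trace(X) = η > 0. Then ‖X‖_F = η if and only if there exists a vector x ∈ ℝⁿ with X = x xᵀ and ‖x‖₂² = η. -/
/-!
Diagonalize `X = U diag(λ) Uᵀ` with `λᵢ ≥ 0`. Then `tr X = ∑ λᵢ` and `‖X‖_F² = tr (X X) = ∑ λᵢ²`,
and `(∑ λᵢ)² = ∑ λᵢ²` forces `λᵢ λⱼ = 0` for `i ≠ j`. Hence `diag(λ) = s sᵀ` with `sᵢ = √λᵢ`, and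
`X = (U s)(U s)ᵀ`; conversely `tr ((x xᵀ)²) = ‖x‖⁴ = (tr (x xᵀ))²`.
-/

open Matrix

noncomputable def frobNorm {n : ℕ} (X : Matrix (Fin n) (Fin n) ℝ) : ℝ :=
  Real.sqrt (Matrix.trace (Xᵀ * X))

open scoped ComplexOrder

namespace Finset

theorem sq_sum_eq_sum_sq_iff_of_nonneg {ι R : Type*} [Semiring R] [PartialOrder R]
    [IsOrderedRing R] [IsLeftCancelAdd R] [DecidableEq ι] {s : Finset ι} {f : ι → R}
    (hf : ∀ i ∈ s, 0 ≤ f i) :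
    (∑ i ∈ s, f i) ^ 2 = ∑ i ∈ s, f i ^ 2 ↔ ∀ i ∈ s, ∀ j ∈ s, i ≠ j → f i * f j = 0 := by
  have hsplit : (∑ i ∈ s, f i) ^ 2
      = ∑ i ∈ s, f i ^ 2 + ∑ p ∈ s.offDiag, f p.1 * f p.2 := by
    rw [sq, sum_mul_sum, ← sum_product', ← diag_union_offDiag,
      sum_union (disjoint_diag_offDiag s), sum_diag]
    simp only [sq]
  rw [hsplit, add_eq_left, sum_eq_zero_iff_of_nonneg fun p hp => mul_nonneg
    (hf _ (mem_offDiag.mp hp).1) (hf _ (mem_offDiag.mp hp).2.1)]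
  simp only [mem_offDiag, and_imp, Prod.forall]
  exact ⟨fun h i hi j hj => h i j hi hj, fun h i j hi hj => h i hi j hj⟩

end Finset

namespace Matrix

variable {n 𝕜 : Type*} [DecidableEq n] [RCLike 𝕜]

theorem diagonal_eq_vecMulVec_sqrt {d : n → ℝ} (hd : ∀ i, 0 ≤ d i)
    (hdd : ∀ i j, i ≠ j → d i * d j = 0) :
    diagonal (RCLike.ofReal ∘ d : n → 𝕜)
      = vecMulVec (fun i => (√(d i) : 𝕜)) (star fun i => (√(d i) : 𝕜)) := by
  ext i j
  rcases eq_or_ne i j with rfl | hij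
  · simp [vecMulVec_apply, ← RCLike.ofReal_mul, Real.mul_self_sqrt (hd i)]
  · simp [vecMulVec_apply, diagonal_apply_ne _ hij, ← RCLike.ofReal_mul, ← Real.sqrt_mul (hd i),
      hdd i j hij]

variable [Fintype n]

theorem trace_unitary_mul_mul_star {R : Type*} [CommRing R] [StarRing R] (U : unitaryGroup n R)
    (M : Matrix n n R) : (U * M * star (U : Matrix n n R)).trace = M.trace := by
  rw [trace_mul_cycle, Unitary.coe_star_mul_self, Matrix.one_mul]

namespace IsHermitian

theorem trace_mul_self_eq_sum_sq_eigenvalues {A : Matrix n n 𝕜} (hA : A.IsHermitian) :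
    (A * A).trace = ∑ i, (hA.eigenvalues i : 𝕜) ^ 2 := by
  conv_lhs => rw [hA.spectral_theorem, ← map_mul, Unitary.conjStarAlgAut_apply,
    trace_unitary_mul_mul_star, diagonal_mul_diagonal, trace_diagonal]
  simp only [Function.comp_apply, sq]

end IsHermitian

theorem PosSemidef.trace_mul_self_eq_sq_trace_iff {A : Matrix n n 𝕜} (hA : A.PosSemidef) :
    (A * A).trace = A.trace ^ 2 ↔ ∃ x : n → 𝕜, A = vecMulVec x (star x) := by
  constructor
  · intro h
    set d := hA.1.eigenvalues
    have hd : ∀ i, 0 ≤ d i := hA.eigenvalues_nonneg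
    have hsq : (∑ i, d i) ^ 2 = ∑ i, d i ^ 2 := by
      rw [hA.1.trace_mul_self_eq_sum_sq_eigenvalues, hA.1.trace_eq_sum_eigenvalues] at h
      exact_mod_cast h.symm
    have hdd : ∀ i j, i ≠ j → d i * d j = 0 := fun i j =>
      (Finset.sq_sum_eq_sum_sq_iff_of_nonneg fun i _ => hd i).mp hsq i
        (Finset.mem_univ i) j (Finset.mem_univ j)
    refine ⟨hA.1.eigenvectorUnitary *ᵥ fun i => (√(d i) : 𝕜), ?_⟩
    conv_lhs => rw [hA.1.spectral_theorem, Unitary.conjStarAlgAut_apply,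
      diagonal_eq_vecMulVec_sqrt hd hdd, mul_vecMulVec, vecMulVec_mul, star_eq_conjTranspose,
      ← star_mulVec]
  · rintro ⟨x, rfl⟩
    rw [vecMulVec_mul_vecMulVec, trace_vecMulVec, trace_vecMulVec, dotProduct_smul, smul_eq_mul,
      dotProduct_comm (star x), sq]

end Matrix

theorem frobNorm_eq_iff {n : ℕ} {X : Matrix (Fin n) (Fin n) ℝ} {c : ℝ} (hc : 0 ≤ c) :
    frobNorm X = c ↔ (Xᵀ * X).trace = c ^ 2 :=
  Real.sqrt_eq_iff_eq_sq (by simpa using (posSemidef_conjTranspose_mul_self X).trace_nonneg) hc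

theorem frobNorm_eq_trace_iff_outer_product_general {n : ℕ} (η : ℝ)
    (X : Matrix (Fin n) (Fin n) ℝ) (hX : X.PosSemidef) (htr : X.trace = η) :
    frobNorm X = η ↔ ∃ x : Fin n → ℝ, X = Matrix.vecMulVec x x ∧ ∑ i, (x i) ^ 2 = η := by
  subst htr
  have hXt : Xᵀ = X := hX.1
  rw [frobNorm_eq_iff hX.trace_nonneg, hXt, hX.trace_mul_self_eq_sq_trace_iff]
  simp only [star_trivial]
  constructor
  · rintro ⟨x, rfl⟩
    exact ⟨x, rfl, by simp [trace_vecMulVec, dotProduct, sq]⟩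
  · rintro ⟨x, hx, -⟩
    exact ⟨x, hx⟩

/-- for a real symmetric positive semidefinite matrix with trace η > 0,
the Frobenius norm equals η iff X = x xᵀ for some vector x with ‖x‖₂² = η. -/
theorem frobNorm_eq_trace_iff_outer_product {n : ℕ} (η : ℝ) (hη : 0 < η)
    (X : Matrix (Fin n) (Fin n) ℝ) (hX : X.PosSemidef) (htr : X.trace = η) :
    frobNorm X = η ↔ ∃ x : Fin n → ℝ, X = Matrix.vecMulVec x x ∧ ∑ i, (x i) ^ 2 = η :=
  frobNorm_eq_trace_iff_outer_product_general η X hX htr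
end

section
/- Let X be an n×n real symmetric matrix and let X₊ be its positive part. Then for every n×n real symmetric positive semidefinite matrix Y, ‖X₊ − X‖_F ≤ ‖Y − X‖_F; that is, X₊ is the Euclidean (Frobenius-norm) projection of X onto the cone of positive semidefinite matrices. -/
open Matrix

/-- The positive part `X₊ = ∑_{λᵢ > 0} λᵢ pᵢ pᵢᵀ` of a real symmetric matrix `X`,
built from an orthonormal eigenbasis `pᵢ` with eigenvalues `λᵢ` (junk value `0` if
`X` is not symmetric). -/
noncomputable def matPosPart {n : ℕ} (X : Matrix (Fin n) (Fin n) ℝ) :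
    Matrix (Fin n) (Fin n) ℝ :=
  if hX : X.IsHermitian then
    ∑ i, if 0 < hX.eigenvalues i then
      hX.eigenvalues i •
        Matrix.vecMulVec (fun j => hX.eigenvectorBasis i j) (fun j => hX.eigenvectorBasis i j)
    else 0
  else 0

/-- The negative part `X₋ = ∑_{λᵢ < 0} λᵢ pᵢ pᵢᵀ` of a real symmetric matrix `X`
(junk value `0` if `X` is not symmetric). -/
noncomputable def matNegPart {n : ℕ} (X : Matrix (Fin n) (Fin n) ℝ) :
    Matrix (Fin n) (Fin n) ℝ :=
  if hX : X.IsHermitian then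
    ∑ i, if hX.eigenvalues i < 0 then
      hX.eigenvalues i •
        Matrix.vecMulVec (fun j => hX.eigenvectorBasis i j) (fun j => hX.eigenvectorBasis i j)
    else 0
  else 0

/-!
Conjugating by the orthogonal eigenvector matrix `U` of `X` preserves the Frobenius norm, turns
`X₊ - X` into `diagonal λ⁻` and `Y - X` into `Z - diagonal λ` with `Z = Uᵀ Y U` positive
semidefinite. The diagonal of `Z - diagonal λ` alone already has norm at least `‖λ⁻‖`, because
`Z i i ≥ 0` forces `|Z i i - λ i| ≥ (λ i)⁻`.
-/

section EigenDecomposition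

variable {ι : Type*} [Fintype ι] [DecidableEq ι] {X : Matrix ι ι ℝ} (hX : X.IsHermitian)

lemma Matrix.IsHermitian.sum_smul_vecMulVec_eigenvectorBasis (c : ι → ℝ) :
    ∑ i, c i • vecMulVec (fun j => hX.eigenvectorBasis i j) (fun j => hX.eigenvectorBasis i j) =
      (hX.eigenvectorUnitary : Matrix ι ι ℝ) * diagonal c *
        star (hX.eigenvectorUnitary : Matrix ι ι ℝ) := by
  ext j k
  simp [Matrix.sum_apply, vecMulVec_apply, mul_apply, diagonal_apply, mul_comm, mul_assoc]

lemma Matrix.IsHermitian.star_eigenvectorUnitary_mul_mul :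
    star (hX.eigenvectorUnitary : Matrix ι ι ℝ) * X * hX.eigenvectorUnitary =
      diagonal hX.eigenvalues := by
  simpa using hX.conjStarAlgAut_star_eigenvectorUnitary

end EigenDecomposition

lemma matPosPart_eq_eigenvectorUnitary_conj {n : ℕ} {X : Matrix (Fin n) (Fin n) ℝ}
    (hX : X.IsHermitian) :
    matPosPart X = (hX.eigenvectorUnitary : Matrix (Fin n) (Fin n) ℝ) *
      diagonal (fun i => (hX.eigenvalues i)⁺) * star (hX.eigenvectorUnitary : Matrix _ _ ℝ) := by
  rw [matPosPart, dif_pos hX, ← hX.sum_smul_vecMulVec_eigenvectorBasis]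
  refine Finset.sum_congr rfl fun i _ => ?_
  split_ifs with hpos
  · rw [posPart_eq_self.mpr hpos.le]
  · rw [posPart_eq_zero.mpr (not_lt.mp hpos), zero_smul]

lemma star_eigenvectorUnitary_mul_matPosPart_sub_mul {n : ℕ} {X : Matrix (Fin n) (Fin n) ℝ}
    (hX : X.IsHermitian) :
    star (hX.eigenvectorUnitary : Matrix (Fin n) (Fin n) ℝ) * (matPosPart X - X) *
        hX.eigenvectorUnitary = diagonal (fun i => (hX.eigenvalues i)⁻) := by
  rw [mul_sub, sub_mul, hX.star_eigenvectorUnitary_mul_mul,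
    matPosPart_eq_eigenvectorUnitary_conj hX]
  simp only [← mul_assoc, Unitary.coe_star_mul_self, one_mul]
  rw [mul_assoc, Unitary.coe_star_mul_self, mul_one, diagonal_sub]
  congr! 2 with i
  linarith [posPart_sub_negPart (hX.eigenvalues i)]

section Frobenius

variable {n : ℕ}

lemma frobNorm_eq_sqrt_sum_sq (M : Matrix (Fin n) (Fin n) ℝ) :
    frobNorm M = √(∑ j, ∑ i, M i j ^ 2) := by
  simp [frobNorm, trace, mul_apply, sq]

lemma frobNorm_diagonal (d : Fin n → ℝ) : frobNorm (diagonal d) = √(∑ i, d i ^ 2) := by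
  simp [frobNorm_eq_sqrt_sum_sq, diagonal_apply]

lemma frobNorm_diagonal_diag_le (M : Matrix (Fin n) (Fin n) ℝ) :
    frobNorm (diagonal M.diag) ≤ frobNorm M := by
  rw [frobNorm_diagonal, frobNorm_eq_sqrt_sum_sq]
  gcongr with j
  exact Finset.single_le_sum (f := fun i => M i j ^ 2) (fun i _ => sq_nonneg _)
    (Finset.mem_univ j)

lemma frobNorm_star_mul_mul_of_mem_unitaryGroup {U : Matrix (Fin n) (Fin n) ℝ}
    (hU : U ∈ unitaryGroup (Fin n) ℝ) (M : Matrix (Fin n) (Fin n) ℝ) :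
    frobNorm (star U * M * U) = frobNorm M := by
  have htr : ∀ A : Matrix (Fin n) (Fin n) ℝ, Aᵀ = star A := fun A =>
    (conjTranspose_eq_transpose_of_trivial A).symm
  have hconj : star (star U * M * U) * (star U * M * U) = star U * (star M * M * U) := by
    simp only [star_mul, star_star, mul_assoc, Unitary.mul_star_self_of_mem hU, one_mul,
      ← mul_assoc U]
  unfold frobNorm
  rw [htr, htr M, hconj, trace_mul_comm, mul_assoc, Unitary.mul_star_self_of_mem hU, mul_one]

end Frobenius

lemma sq_negPart_le_sq_sub {α : Type*} [Ring α] [LinearOrder α] [IsStrictOrderedRing α]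
    {a z : α} (hz : 0 ≤ z) : a⁻ ^ 2 ≤ (z - a) ^ 2 := by
  rcases le_or_gt a 0 with ha | ha
  · rw [negPart_eq_neg.mpr ha]
    exact pow_le_pow_left₀ (neg_nonneg.mpr ha)
      (by rw [sub_eq_add_neg]; exact le_add_of_nonneg_left hz) 2
  · rw [negPart_eq_zero.mpr ha.le, sq, zero_mul]
    exact sq_nonneg _

lemma frobNorm_diagonal_negPart_le {n : ℕ} {Z : Matrix (Fin n) (Fin n) ℝ} (hZ : Z.PosSemidef)
    (d : Fin n → ℝ) : frobNorm (diagonal fun i => (d i)⁻) ≤ frobNorm (Z - diagonal d) := by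
  refine le_trans ?_ (frobNorm_diagonal_diag_le _)
  rw [frobNorm_diagonal, frobNorm_diagonal]
  refine Real.sqrt_le_sqrt (Finset.sum_le_sum fun i _ => ?_)
  simpa using sq_negPart_le_sq_sub (a := d i) hZ.diag_nonneg

/-- the positive part X₊ of a real symmetric matrix X is the Frobenius-norm
projection of X onto the positive semidefinite cone: for every symmetric p.s.d. Y,
‖X₊ − X‖_F ≤ ‖Y − X‖_F. -/
theorem matPosPart_is_projection {n : ℕ}
    (X : Matrix (Fin n) (Fin n) ℝ) (hX : X.IsHermitian) :
    ∀ Y : Matrix (Fin n) (Fin n) ℝ, Y.PosSemidef →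
      frobNorm (matPosPart X - X) ≤ frobNorm (Y - X) := by
  intro Y hY
  set U : Matrix (Fin n) (Fin n) ℝ := ↑hX.eigenvectorUnitary
  have hU : U ∈ unitaryGroup (Fin n) ℝ := hX.eigenvectorUnitary.2
  have hZ : (star U * Y * U).PosSemidef := by
    rw [star_eq_conjTranspose]
    exact hY.conjTranspose_mul_mul_same _
  calc frobNorm (matPosPart X - X)
      = frobNorm (diagonal fun i => (hX.eigenvalues i)⁻) := by
        rw [← star_eigenvectorUnitary_mul_matPosPart_sub_mul hX,
          frobNorm_star_mul_mul_of_mem_unitaryGroup hU]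
    _ ≤ frobNorm (star U * Y * U - diagonal hX.eigenvalues) :=
        frobNorm_diagonal_negPart_le hZ _
    _ = frobNorm (Y - X) := by
        rw [← hX.star_eigenvectorUnitary_mul_mul, ← sub_mul, ← mul_sub,
          frobNorm_star_mul_mul_of_mem_unitaryGroup hU]
end

section
/- Let X be an n×n real symmetric matrix and let X₊ be its positive part, with Y any n×n real symmetric positive semidefinite matrix satisfying ‖Y − X‖_F = ‖X₊ − X‖_F. Then Y = X₊; i.e., the minimizer of ‖Y − X‖_F² over the positive semidefinite cone is unique. -/
open Matrix

/-! Spectrally, `X = X₊ + X₋` with `X₊ ⪰ 0`, `-X₋ ⪰ 0` and `X₊ X₋ = 0`. For `Y ⪰ 0` the cross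
term `⟨Y - X₊, X₊ - X⟩ = tr (Y (-X₋)) - tr (X₊ (-X₋)) = tr (Y (-X₋))` is the trace of a product
of two positive semidefinite matrices, hence nonnegative, so
`‖Y - X‖² ≥ ‖Y - X₊‖² + ‖X₊ - X‖²`. Equality of `‖Y - X‖` and `‖X₊ - X‖` then forces
`‖Y - X₊‖ = 0`. -/

namespace Matrix

variable {ι : Type*} [Fintype ι]

open scoped ComplexOrder MatrixOrder in
theorem PosSemidef.trace_mul_nonneg {𝕜 : Type*} [RCLike 𝕜] {A B : Matrix ι ι 𝕜}
    (hA : A.PosSemidef) (hB : B.PosSemidef) : 0 ≤ (A * B).trace := by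
  classical
  have hsqrt := (CFC.sqrt_nonneg A).posSemidef
  have h := hB.conjTranspose_mul_mul_same (CFC.sqrt A)
  rw [hsqrt.isHermitian.eq] at h
  calc 0 ≤ (CFC.sqrt A * B * CFC.sqrt A).trace := h.trace_nonneg
    _ = (A * B).trace := by
      rw [trace_mul_cycle, CFC.sqrt_mul_sqrt_self A hA.nonneg]

theorem trace_transpose_mul_self_nonneg (A : Matrix ι ι ℝ) : 0 ≤ (Aᵀ * A).trace := by
  simpa using (posSemidef_conjTranspose_mul_self A).trace_nonneg

theorem trace_transpose_mul_add_self {R : Type*} [CommRing R] (A B : Matrix ι ι R) :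
    ((A + B)ᵀ * (A + B)).trace = (Aᵀ * A).trace + 2 * (Aᵀ * B).trace + (Bᵀ * B).trace := by
  have hBA : (Bᵀ * A).trace = (Aᵀ * B).trace := by
    rw [← trace_transpose, transpose_mul, transpose_transpose]
  rw [transpose_add, add_mul, mul_add, mul_add, trace_add, trace_add, trace_add, hBA]
  ring

theorem trace_transpose_mul_sub_add_le {X P Y : Matrix ι ι ℝ} (hP : P.IsHermitian)
    (hPX : (P - X).PosSemidef) (hperp : P * (P - X) = 0) (hY : Y.PosSemidef) :
    ((Y - P)ᵀ * (Y - P)).trace + ((P - X)ᵀ * (P - X)).trace ≤ ((Y - X)ᵀ * (Y - X)).trace := by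
  have hcross : 0 ≤ ((Y - P)ᵀ * (P - X)).trace := by
    rw [transpose_sub, ← conjTranspose_eq_transpose_of_trivial Y,
      ← conjTranspose_eq_transpose_of_trivial P, hY.isHermitian.eq, hP.eq, sub_mul, hperp,
      sub_zero]
    exact hY.trace_mul_nonneg hPX
  rw [show Y - X = (Y - P) + (P - X) by abel, trace_transpose_mul_add_self]
  linarith

namespace IsHermitian

variable [DecidableEq ι] {X : Matrix ι ι ℝ} (hX : X.IsHermitian)

noncomputable def eigenProj (i : ι) : Matrix ι ι ℝ :=
  vecMulVec ⇑(hX.eigenvectorBasis i) ⇑(hX.eigenvectorBasis i)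

theorem posSemidef_eigenProj (i : ι) : (hX.eigenProj i).PosSemidef :=
  posSemidef_vecMulVec_self_star _

theorem eigenProj_mul_eigenProj (i j : ι) :
    hX.eigenProj i * hX.eigenProj j = if i = j then hX.eigenProj i else 0 := by
  have horth := orthonormal_iff_ite.mp hX.eigenvectorBasis.orthonormal i j
  rw [EuclideanSpace.inner_eq_star_dotProduct, star_trivial, dotProduct_comm] at horth
  rw [eigenProj, eigenProj, vecMulVec_mul_vecMulVec, horth]
  split_ifs with h
  · rw [h, one_smul]
  · rw [zero_smul, vecMulVec_zero]

theorem sum_eigenvalues_smul_eigenProj : ∑ i, hX.eigenvalues i • hX.eigenProj i = X := by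
  ext a b
  conv_rhs => rw [hX.spectral_theorem]
  simp only [eigenProj, sum_apply, smul_apply, vecMulVec_apply, smul_eq_mul,
    RCLike.ofReal_real_eq_id, CompTriple.comp_eq, Unitary.conjStarAlgAut_apply, mul_apply,
    eigenvectorUnitary_apply, diagonal_apply, mul_ite, mul_zero, Finset.sum_ite_eq',
    Finset.mem_univ, ↓reduceIte, star_apply, star_trivial]
  exact Finset.sum_congr rfl fun c _ => by ring

end IsHermitian

end Matrix

open Finset

section PosNegPart

variable {n : ℕ} {X : Matrix (Fin n) (Fin n) ℝ}

theorem frobNorm_sq (A : Matrix (Fin n) (Fin n) ℝ) : frobNorm A ^ 2 = (Aᵀ * A).trace :=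
  Real.sq_sqrt A.trace_transpose_mul_self_nonneg

theorem matPosPart_eq (hX : X.IsHermitian) :
    matPosPart X = ∑ i with 0 < hX.eigenvalues i, hX.eigenvalues i • hX.eigenProj i := by
  rw [matPosPart, dif_pos hX, sum_filter]
  rfl

theorem matNegPart_eq (hX : X.IsHermitian) :
    matNegPart X = ∑ i with hX.eigenvalues i < 0, hX.eigenvalues i • hX.eigenProj i := by
  rw [matNegPart, dif_pos hX, sum_filter]
  rfl

theorem posSemidef_matPosPart (hX : X.IsHermitian) : (matPosPart X).PosSemidef := by
  rw [matPosPart_eq hX]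
  exact posSemidef_sum _ fun i hi ↦ (hX.posSemidef_eigenProj i).smul (mem_filter.mp hi).2.le

theorem posSemidef_neg_matNegPart (hX : X.IsHermitian) : (-matNegPart X).PosSemidef := by
  rw [matNegPart_eq hX, ← sum_neg_distrib]
  refine posSemidef_sum _ fun i hi ↦ ?_
  rw [← neg_smul]
  exact (hX.posSemidef_eigenProj i).smul (neg_nonneg.mpr (mem_filter.mp hi).2.le)

theorem matPosPart_mul_matNegPart (hX : X.IsHermitian) : matPosPart X * matNegPart X = 0 := by
  rw [matPosPart_eq hX, matNegPart_eq hX, sum_mul_sum]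
  refine sum_eq_zero fun i hi ↦ sum_eq_zero fun j hj ↦ ?_
  have hij : i ≠ j := by
    rintro rfl
    exact lt_asymm (mem_filter.mp hi).2 (mem_filter.mp hj).2
  rw [smul_mul_smul_comm, hX.eigenProj_mul_eigenProj, if_neg hij, smul_zero]

theorem matPosPart_add_matNegPart (hX : X.IsHermitian) : matPosPart X + matNegPart X = X := by
  conv_rhs => rw [← hX.sum_eigenvalues_smul_eigenProj, ← sum_filter_add_sum_filter_not univ
    (fun i ↦ 0 < hX.eigenvalues i)]
  rw [matPosPart_eq hX, matNegPart_eq hX]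
  congr 1
  refine sum_subset (fun i hi ↦ ?_) fun i hi hi' ↦ ?_
  · simp only [mem_filter] at hi ⊢
    exact ⟨hi.1, hi.2.not_gt⟩
  · simp only [mem_filter, mem_univ, true_and, not_lt] at hi hi'
    rw [le_antisymm hi hi', zero_smul]

theorem matPosPart_sub_self (hX : X.IsHermitian) : matPosPart X - X = -matNegPart X := by
  rw [eq_neg_iff_add_eq_zero, sub_add_eq_add_sub, matPosPart_add_matNegPart hX, sub_self]

end PosNegPart

/-- the Frobenius-norm projection of a real symmetric matrix X onto the
positive semidefinite cone is unique: any symmetric p.s.d. Y with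
‖Y − X‖_F = ‖X₊ − X‖_F must equal X₊. -/
theorem matPosPart_projection_unique {n : ℕ}
    (X : Matrix (Fin n) (Fin n) ℝ) (hX : X.IsHermitian)
    (Y : Matrix (Fin n) (Fin n) ℝ) (hY : Y.PosSemidef)
    (heq : frobNorm (Y - X) = frobNorm (matPosPart X - X)) :
    Y = matPosPart X := by
  have hPX := matPosPart_sub_self hX
  have hobtuse := trace_transpose_mul_sub_add_le (posSemidef_matPosPart hX).isHermitian
    (hPX ▸ posSemidef_neg_matNegPart hX)
    (by rw [hPX, mul_neg, matPosPart_mul_matNegPart hX, neg_zero]) hY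
  rw [← frobNorm_sq, ← frobNorm_sq, ← frobNorm_sq, heq] at hobtuse
  have h0 : frobNorm (Y - matPosPart X) ^ 2 = 0 := le_antisymm (by linarith) (sq_nonneg _)
  rwa [frobNorm_sq, ← conjTranspose_eq_transpose_of_trivial,
    trace_conjTranspose_mul_self_eq_zero_iff, sub_eq_zero] at h0
end

section
/- Let X be an n×n real symmetric matrix. Then the squared Frobenius distance from X to the cone of positive semidefinite symmetric matrices equals ‖X₋‖_F², i.e., inf over symmetric Y ⪰ 0 of ‖Y − X‖_F² equals ‖X₋‖_F². -/
/-!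
Let `U` be the orthogonal matrix of eigenvectors of `X`, so that `Uᵀ X U = diag λ`.
Conjugation by `U` preserves `trace (Mᵀ M)`, and the diagonal entries of `Uᵀ Y U` are
nonnegative when `Y ⪰ 0`. Hence, with `B = Uᵀ (Y - X) U`,
`trace ((Y - X)ᵀ (Y - X)) = trace (Bᵀ B) ≥ ∑ᵢ Bᵢᵢ² = ∑ᵢ ((Uᵀ Y U)ᵢᵢ - λᵢ)² ≥ ∑ᵢ min(λᵢ, 0)²`,
which is `trace (X₋ᵀ X₋)`. The bound is attained at `Y = X₊`, since `X = X₊ + X₋`.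
-/

open Matrix

theorem min_zero_sq_le_sq_sub {R : Type*} [CommRing R] [LinearOrder R] [IsStrictOrderedRing R]
    {a b : R} (ha : 0 ≤ a) : min b 0 ^ 2 ≤ (a - b) ^ 2 := by
  rcases le_total b 0 with hb | hb
  · rw [min_eq_left hb]
    nlinarith
  · rw [min_eq_right hb]
    nlinarith

namespace Matrix

section

variable {m R : Type*} [Fintype m]

theorem sum_sq_diag_le_trace_transpose_mul_self [CommRing R] [LinearOrder R]
    [IsStrictOrderedRing R] (M : Matrix m m R) :
    ∑ i, M i i ^ 2 ≤ trace (Mᵀ * M) := by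
  simp only [trace, diag, mul_apply, transpose_apply, ← sq]
  exact Finset.sum_le_sum fun i _ =>
    Finset.single_le_sum (f := fun j => M j i ^ 2) (fun j _ => sq_nonneg _) (Finset.mem_univ i)

variable [DecidableEq m]

theorem trace_transpose_mul_self_conj [CommSemiring R] {U : Matrix m m R}
    (hU : Uᵀ * U = 1) (M : Matrix m m R) :
    trace ((U * M * Uᵀ)ᵀ * (U * M * Uᵀ)) = trace (Mᵀ * M) := by
  calc trace ((U * M * Uᵀ)ᵀ * (U * M * Uᵀ)) = trace (U * (Mᵀ * (Uᵀ * U) * M) * Uᵀ) := by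
        simp only [transpose_mul, transpose_transpose, Matrix.mul_assoc]
    _ = trace (Mᵀ * M) := by
        rw [trace_mul_cycle, hU, Matrix.mul_one, Matrix.one_mul]

theorem trace_transpose_mul_self_diagonal [CommSemiring R] (d : m → R) :
    trace ((diagonal d)ᵀ * diagonal d) = ∑ i, d i ^ 2 := by
  simp [sq]

theorem mul_diagonal_mul_transpose_eq_sum [CommSemiring R] (U : Matrix m m R) (c : m → R) :
    U * diagonal c * Uᵀ = ∑ i, c i • vecMulVec (fun j => U j i) (fun j => U j i) := by
  ext k l
  rw [mul_apply, Matrix.sum_apply]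
  simp only [mul_diagonal, transpose_apply, Matrix.smul_apply, vecMulVec_apply, smul_eq_mul]
  exact Finset.sum_congr rfl fun i _ => by ring

end

namespace IsHermitian

section

variable {m : Type*} [Fintype m] [DecidableEq m] {X : Matrix m m ℝ}

theorem transpose_eigenvectorUnitary_mul_self (hX : X.IsHermitian) :
    (hX.eigenvectorUnitary : Matrix m m ℝ)ᵀ * hX.eigenvectorUnitary = 1 := by
  simpa [star_eq_conjTranspose] using Unitary.coe_star_mul_self hX.eigenvectorUnitary

theorem eigenvectorUnitary_mul_transpose_self (hX : X.IsHermitian) :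
    (hX.eigenvectorUnitary : Matrix m m ℝ) * (hX.eigenvectorUnitary : Matrix m m ℝ)ᵀ = 1 := by
  simpa [star_eq_conjTranspose] using Unitary.coe_mul_star_self hX.eigenvectorUnitary

theorem eq_eigenvectorUnitary_mul_diagonal_mul_transpose (hX : X.IsHermitian) :
    X = hX.eigenvectorUnitary * diagonal hX.eigenvalues *
      (hX.eigenvectorUnitary : Matrix m m ℝ)ᵀ := by
  conv_lhs => rw [hX.spectral_theorem]
  simp [star_eq_conjTranspose]

theorem transpose_eigenvectorUnitary_mul_mul_self (hX : X.IsHermitian) :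
    (hX.eigenvectorUnitary : Matrix m m ℝ)ᵀ * X * hX.eigenvectorUnitary =
      diagonal hX.eigenvalues := by
  simpa [star_eq_conjTranspose] using hX.conjStarAlgAut_star_eigenvectorUnitary

theorem sum_sq_min_eigenvalues_zero_le (hX : X.IsHermitian) {Y : Matrix m m ℝ}
    (hY : Y.PosSemidef) :
    ∑ i, min (hX.eigenvalues i) 0 ^ 2 ≤ trace ((Y - X)ᵀ * (Y - X)) := by
  set U : Matrix m m ℝ := ↑hX.eigenvectorUnitary
  have hUtU : Uᵀ * U = 1 := hX.transpose_eigenvectorUnitary_mul_self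
  have hUUt : U * Uᵀ = 1 := hX.eigenvectorUnitary_mul_transpose_self
  have hUtXU : Uᵀ * X * U = diagonal hX.eigenvalues :=
    hX.transpose_eigenvectorUnitary_mul_mul_self
  set B := Uᵀ * (Y - X) * U
  have hB : Y - X = U * B * Uᵀ := by
    simp only [B, ← Matrix.mul_assoc, hUUt, Matrix.one_mul]
    rw [Matrix.mul_assoc, hUUt, Matrix.mul_one]
  have hB_diag (i : m) : B i i = (Uᵀ * Y * U) i i - hX.eigenvalues i := by
    simp [B, Matrix.mul_sub, Matrix.sub_mul, hUtXU]
  have hY_diag (i : m) : 0 ≤ (Uᵀ * Y * U) i i := by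
    simpa using (hY.conjTranspose_mul_mul_same U).diag_nonneg (i := i)
  calc ∑ i, min (hX.eigenvalues i) 0 ^ 2 ≤ ∑ i, B i i ^ 2 :=
        Finset.sum_le_sum fun i _ => hB_diag i ▸ min_zero_sq_le_sq_sub (hY_diag i)
    _ ≤ trace (Bᵀ * B) := sum_sq_diag_le_trace_transpose_mul_self B
    _ = trace ((Y - X)ᵀ * (Y - X)) := by
        rw [hB, trace_transpose_mul_self_conj hUtU]

end

variable {n : ℕ} {X : Matrix (Fin n) (Fin n) ℝ}

theorem matPosPart_eq (hX : X.IsHermitian) :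
    matPosPart X = hX.eigenvectorUnitary * diagonal (fun i => max (hX.eigenvalues i) 0) *
      (hX.eigenvectorUnitary : Matrix (Fin n) (Fin n) ℝ)ᵀ := by
  rw [mul_diagonal_mul_transpose_eq_sum, matPosPart, dif_pos hX]
  refine Finset.sum_congr rfl fun i _ => ?_
  split_ifs with h
  · simp [max_eq_left h.le]
  · simp [max_eq_right (not_lt.mp h)]

theorem matNegPart_eq (hX : X.IsHermitian) :
    matNegPart X = hX.eigenvectorUnitary * diagonal (fun i => min (hX.eigenvalues i) 0) *
      (hX.eigenvectorUnitary : Matrix (Fin n) (Fin n) ℝ)ᵀ := by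
  rw [mul_diagonal_mul_transpose_eq_sum, matNegPart, dif_pos hX]
  refine Finset.sum_congr rfl fun i _ => ?_
  split_ifs with h
  · simp [min_eq_left h.le]
  · simp [min_eq_right (not_lt.mp h)]

theorem matPosPart_add_matNegPart (hX : X.IsHermitian) : matPosPart X + matNegPart X = X := by
  rw [hX.matPosPart_eq, hX.matNegPart_eq, ← Matrix.add_mul, ← Matrix.mul_add, diagonal_add]
  conv_rhs => rw [hX.eq_eigenvectorUnitary_mul_diagonal_mul_transpose]
  simp only [max_add_min, add_zero]

theorem posSemidef_matPosPart (hX : X.IsHermitian) : (matPosPart X).PosSemidef := by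
  rw [hX.matPosPart_eq, ← conjTranspose_eq_transpose_of_trivial]
  exact (PosSemidef.diagonal fun i => le_max_right _ _).mul_mul_conjTranspose_same _

theorem trace_transpose_mul_self_matNegPart (hX : X.IsHermitian) :
    trace ((matNegPart X)ᵀ * matNegPart X) = ∑ i, min (hX.eigenvalues i) 0 ^ 2 := by
  rw [hX.matNegPart_eq, trace_transpose_mul_self_conj hX.transpose_eigenvectorUnitary_mul_self,
    trace_transpose_mul_self_diagonal]

end IsHermitian

end Matrix

/-- the squared Frobenius distance from a real symmetric matrix X to the
cone of positive semidefinite matrices equals ‖X₋‖_F²; i.e., ‖X₋‖_F² is the infimum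
of ‖Y − X‖_F² = trace((Y − X)ᵀ (Y − X)) over symmetric Y ⪰ 0. -/
theorem sq_dist_to_psd_cone_eq_matNegPart {n : ℕ}
    (X : Matrix (Fin n) (Fin n) ℝ) (hX : X.IsHermitian) :
    IsGLB {d : ℝ | ∃ Y : Matrix (Fin n) (Fin n) ℝ, Y.PosSemidef ∧
        d = Matrix.trace ((Y - X)ᵀ * (Y - X))}
      (Matrix.trace ((matNegPart X)ᵀ * matNegPart X)) := by
  refine IsLeast.isGLB ⟨⟨matPosPart X, hX.posSemidef_matPosPart, ?_⟩, ?_⟩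
  · rw [eq_sub_of_add_eq hX.matPosPart_add_matNegPart, sub_sub_cancel_left, transpose_neg,
      neg_mul_neg]
  · rintro _ ⟨Y, hY, rfl⟩
    rw [hX.trace_transpose_mul_self_matNegPart]
    exact hX.sum_sq_min_eigenvalues_zero_le hY
end

section
/- Weak duality for the penalized SDP: let A, B₁, …, B_m be n×n real symmetric matrices, b ∈ ℝ^m, σ > 0 and η ∈ ℝ. Suppose X is an n×n symmetric positive semidefinite matrix with ⟨X, Bᵢ⟩ = bᵢ for i = 1,…,p and ⟨X, B_j⟩ ≤ b_j for j = p+1,…,m, and suppose u ∈ ℝ^m satisfies u_j ≥ 0 for j = p+1,…,m. Then, with C(u) = A + Σᵢ uᵢ Bᵢ, the dual value −(1/(4σ))‖C(u)₋‖_F² − uᵀb − ση² is at most the primal value ⟨X, A⟩ + σ(‖X‖_F² − η²). -/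
/-!
Write `C = A + ∑ uᵢ Bᵢ` and `N = C₋`. Since `C - N = ∑_{λᵢ ≥ 0} λᵢ pᵢ pᵢᵀ` is positive semidefinite,
`⟨X, N⟩ ≤ ⟨X, C⟩ = ⟨X, A⟩ + ∑ uᵢ ⟨X, Bᵢ⟩ ≤ ⟨X, A⟩ + uᵀb`, the last step by feasibility of `X`
and `u`. Completing the square, `0 ≤ σ ‖X + N / (2σ)‖_F² = σ ‖X‖_F² + ⟨X, N⟩ + ‖N‖_F² / (4σ)`,
and the two bounds combine to the claim.
-/

open Matrix

namespace Matrix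

open scoped ComplexOrder in
theorem PosSemidef.trace_mul_nonneg_s9 {ι 𝕜 : Type*} [Fintype ι] [RCLike 𝕜] {X M : Matrix ι ι 𝕜}
    (hX : X.PosSemidef) (hM : M.PosSemidef) : 0 ≤ trace (X * M) := by
  classical
  open scoped MatrixOrder in
  obtain ⟨Y, rfl⟩ := CStarAlgebra.nonneg_iff_eq_star_mul_self.mp hX.nonneg
  rw [Matrix.mul_assoc, trace_mul_comm]
  exact (hM.mul_mul_conjTranspose_same Y).trace_nonneg

theorem trace_transpose_mul_self_nonneg_s9 {m k : Type*} [Fintype m] [Fintype k] (X : Matrix m k ℝ) :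
    0 ≤ trace (Xᵀ * X) := by
  simpa using (posSemidef_conjTranspose_mul_self X).trace_nonneg

theorem posSemidef_sum_smul_vecMulVec_self {ι κ : Type*} [Fintype ι] [Fintype κ]
    (c : κ → ℝ) (v : κ → ι → ℝ) (hc : ∀ k, 0 ≤ c k) :
    (∑ k, c k • vecMulVec (v k) (v k)).PosSemidef :=
  posSemidef_sum _ fun k _ => (posSemidef_vecMulVec_self_star (v k)).smul (hc k)

theorem IsHermitian.eq_sum_eigenvalues_smul_vecMulVec {ι : Type*} [Fintype ι] [DecidableEq ι]
    {C : Matrix ι ι ℝ} (hC : C.IsHermitian) :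
    C = ∑ i, hC.eigenvalues i •
      vecMulVec (fun j => hC.eigenvectorBasis i j) (fun j => hC.eigenvectorBasis i j) := by
  conv_lhs => rw [hC.spectral_theorem]
  ext j k
  simp only [RCLike.ofReal_real_eq_id, CompTriple.comp_eq, Unitary.conjStarAlgAut_apply, mul_apply,
    eigenvectorUnitary_apply, diagonal_apply, mul_ite, mul_zero, Finset.sum_ite_eq',
    Finset.mem_univ, ↓reduceIte, star_apply, star_trivial, sum_apply, smul_apply,
    vecMulVec_apply, smul_eq_mul]
  exact Finset.sum_congr rfl fun i _ => by ring

theorem neg_div_four_mul_trace_transpose_mul_self_le {m k : Type*} [Fintype m] [Fintype k]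
    {σ : ℝ} (hσ : 0 < σ) (X N : Matrix m k ℝ) :
    -(1 / (4 * σ)) * trace (Nᵀ * N) ≤ σ * trace (Xᵀ * X) + trace (Xᵀ * N) := by
  set t := (2 * σ)⁻¹ with ht
  have hsq := trace_transpose_mul_self_nonneg_s9 (X + t • N)
  have hNX : trace (Nᵀ * X) = trace (Xᵀ * N) := by
    rw [← trace_transpose, transpose_mul, transpose_transpose]
  have hexpand : trace ((X + t • N)ᵀ * (X + t • N)) =
      trace (Xᵀ * X) + 2 * t * trace (Xᵀ * N) + t ^ 2 * trace (Nᵀ * N) := by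
    simp only [transpose_add, transpose_smul, Matrix.add_mul, Matrix.mul_add, Matrix.smul_mul,
      Matrix.mul_smul, trace_add, trace_smul, smul_eq_mul, hNX]
    ring
  calc -(1 / (4 * σ)) * trace (Nᵀ * N)
      ≤ -(1 / (4 * σ)) * trace (Nᵀ * N) + σ * trace ((X + t • N)ᵀ * (X + t • N)) :=
        le_add_of_nonneg_right (mul_nonneg hσ.le hsq)
    _ = σ * trace (Xᵀ * X) + trace (Xᵀ * N) := by
        rw [hexpand, ht]
        field_simp
        ring

end Matrix

section NegPart

variable {n : ℕ} {C : Matrix (Fin n) (Fin n) ℝ}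

theorem matNegPart_eq_sum_min (hC : C.IsHermitian) :
    matNegPart C = ∑ i, min (hC.eigenvalues i) 0 •
      vecMulVec (fun j => hC.eigenvectorBasis i j) (fun j => hC.eigenvectorBasis i j) := by
  rw [matNegPart, dif_pos hC]
  refine Finset.sum_congr rfl fun i _ => ?_
  split_ifs with h
  · rw [min_eq_left h.le]
  · rw [min_eq_right (not_lt.mp h), zero_smul]

theorem posSemidef_sub_matNegPart (hC : C.IsHermitian) : (C - matNegPart C).PosSemidef := by
  rw [matNegPart_eq_sum_min hC]
  nth_rewrite 1 [hC.eq_sum_eigenvalues_smul_vecMulVec]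
  rw [← Finset.sum_sub_distrib]
  simp_rw [← sub_smul]
  exact posSemidef_sum_smul_vecMulVec_self _ _ fun i => sub_nonneg.mpr (min_le_left _ _)

theorem trace_transpose_mul_matNegPart_le {X : Matrix (Fin n) (Fin n) ℝ} (hX : X.PosSemidef)
    (hC : C.IsHermitian) : trace (Xᵀ * matNegPart C) ≤ trace (Xᵀ * C) := by
  have h := hX.transpose.trace_mul_nonneg_s9 (posSemidef_sub_matNegPart hC)
  rw [Matrix.mul_sub, trace_sub] at h
  linarith

end NegPart

theorem sum_mul_le_sum_mul_of_feasible {m p : ℕ} {a b u : Fin m → ℝ}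
    (heq : ∀ i : Fin m, (i : ℕ) < p → a i = b i) (hineq : ∀ j : Fin m, p ≤ (j : ℕ) → a j ≤ b j)
    (hu : ∀ j : Fin m, p ≤ (j : ℕ) → 0 ≤ u j) :
    ∑ i, u i * a i ≤ ∑ i, u i * b i := by
  refine Finset.sum_le_sum fun i _ => ?_
  rcases lt_or_ge (i : ℕ) p with hi | hi
  · rw [heq i hi]
  · exact mul_le_mul_of_nonneg_left (hineq i hi) (hu i hi)

theorem sdcut_weak_duality_general {n m p : ℕ}
    (A : Matrix (Fin n) (Fin n) ℝ) (hA : A.IsHermitian)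
    (B : Fin m → Matrix (Fin n) (Fin n) ℝ) (hB : ∀ i, (B i).IsHermitian)
    (b u : Fin m → ℝ) (σ η : ℝ) (hσ : 0 < σ)
    (X : Matrix (Fin n) (Fin n) ℝ) (hX : X.PosSemidef)
    (heq : ∀ i : Fin m, (i : ℕ) < p → Matrix.trace (Xᵀ * B i) = b i)
    (hineq : ∀ j : Fin m, p ≤ (j : ℕ) → Matrix.trace (Xᵀ * B j) ≤ b j)
    (hu : ∀ j : Fin m, p ≤ (j : ℕ) → 0 ≤ u j) :
    -(1 / (4 * σ)) *
        Matrix.trace ((matNegPart (A + ∑ i, u i • B i))ᵀ * matNegPart (A + ∑ i, u i • B i)) -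
      (∑ i, u i * b i) - σ * η ^ 2 ≤
    Matrix.trace (Xᵀ * A) + σ * (Matrix.trace (Xᵀ * X) - η ^ 2) := by
  set C := A + ∑ i, u i • B i
  have hC : C.IsHermitian := hA.add (isSelfAdjoint_sum _ fun i _ => (hB i).smul (.all (u i)))
  have hsquare := neg_div_four_mul_trace_transpose_mul_self_le hσ X (matNegPart C)
  have hnegPart := trace_transpose_mul_matNegPart_le hX hC
  have hlinear : trace (Xᵀ * C) = trace (Xᵀ * A) + ∑ i, u i * trace (Xᵀ * B i) := by
    simp only [C, Matrix.mul_add, Matrix.mul_sum, Matrix.mul_smul, trace_add, trace_sum,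
      trace_smul, smul_eq_mul]
  have hdual := sum_mul_le_sum_mul_of_feasible heq hineq hu
  linarith

/-- weak duality for the penalized SDP.  With symmetric data matrices
A, B₁, …, B_m, a primal-feasible X (p.s.d., equality constraints ⟨X, Bᵢ⟩ = bᵢ for i ≤ p,
inequality constraints ⟨X, Bⱼ⟩ ≤ bⱼ for p < j ≤ m) and a dual-feasible u (uⱼ ≥ 0 on the
inequality constraints), the dual value −(1/(4σ))‖C(u)₋‖_F² − uᵀb − ση² is at most the
penalized primal value ⟨X, A⟩ + σ(‖X‖_F² − η²), where C(u) = A + ∑ᵢ uᵢ Bᵢ. -/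
theorem sdcut_weak_duality {n m p : ℕ} (hpm : p ≤ m)
    (A : Matrix (Fin n) (Fin n) ℝ) (hA : A.IsHermitian)
    (B : Fin m → Matrix (Fin n) (Fin n) ℝ) (hB : ∀ i, (B i).IsHermitian)
    (b u : Fin m → ℝ) (σ η : ℝ) (hσ : 0 < σ)
    (X : Matrix (Fin n) (Fin n) ℝ) (hX : X.PosSemidef)
    (heq : ∀ i : Fin m, (i : ℕ) < p → Matrix.trace (Xᵀ * B i) = b i)
    (hineq : ∀ j : Fin m, p ≤ (j : ℕ) → Matrix.trace (Xᵀ * B j) ≤ b j)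
    (hu : ∀ j : Fin m, p ≤ (j : ℕ) → 0 ≤ u j) :
    -(1 / (4 * σ)) *
        Matrix.trace ((matNegPart (A + ∑ i, u i • B i))ᵀ * matNegPart (A + ∑ i, u i • B i)) -
      (∑ i, u i * b i) - σ * η ^ 2 ≤
    Matrix.trace (Xᵀ * A) + σ * (Matrix.trace (Xᵀ * X) - η ^ 2) :=
  sdcut_weak_duality_general A hA B hB b u σ η hσ X hX heq hineq hu
end
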